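/- arXiv:cs/0411097 — 7 statements merged into one kernel-verified Lean document; each statement's English description precedes it below -/
import Mathlib

section
/- In a conditional model, f(B, Ω) = B for every B; that is, conditioning on the top element is the identity. -/
theorem cond_top {𝔅 : Type*} [BooleanAlgebra 𝔅] (f : 𝔅 → 𝔅 → 𝔅)
    (β3 : ∀ A B : 𝔅, A ⊓ f B A ≤ B)
    (β4 : ∀ A B : 𝔅, f Bᶜ A = (f B A)ᶜ) :
    ∀ B : 𝔅, f B ⊤ = B := by
  intro B
  have h1 : f B ⊤ ≤ B := by simpa using β3 ⊤ B
  have h2 : (f B ⊤)ᶜ ≤ Bᶜ := by simpa [β4] using β3 ⊤ Bᶜ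
  exact le_antisymm h1 (compl_le_compl_iff_le.mp h2)
end

section
/- In a conditional model satisfying β3, β4 and β5w, one has f(B, ∅) = B for every B; that is, conditioning on the bottom element is the identity. -/
theorem cond_bot {𝔅 : Type*} [BooleanAlgebra 𝔅] (f : 𝔅 → 𝔅 → 𝔅)
    (β3 : ∀ A B : 𝔅, A ⊓ f B A ≤ B)
    (β4 : ∀ A B : 𝔅, f Bᶜ A = (f B A)ᶜ)
    (β5w : ∀ A B : 𝔅, f B A = B → f B Aᶜ = B) :
    ∀ B : 𝔅, f B ⊥ = B := by
  intro B
  have htop : f B ⊤ = B := by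
    have h1 : f B ⊤ ≤ B := by simpa using β3 ⊤ B
    have h2 : (f B ⊤)ᶜ ≤ Bᶜ := by
      have := β3 ⊤ Bᶜ
      simpa [β4] using this
    exact le_antisymm h1 (compl_le_compl_iff_le.mp h2)
  have := β5w ⊤ B htop
  simpa using this
end

section
/- Inference property: in a Boolean algebra with an operation f satisfying (β3) A ∩ f(B, A) ⊂ B and (β4) f(∼B, A) = ∼f(B, A), one has A ∩ f(B, A) = A ∩ B for all A, B. -/
theorem inference_property {𝔅 : Type*} [BooleanAlgebra 𝔅] (f : 𝔅 → 𝔅 → 𝔅)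
    (β3 : ∀ A B : 𝔅, A ⊓ f B A ≤ B)
    (β4 : ∀ A B : 𝔅, f Bᶜ A = (f B A)ᶜ) :
    ∀ A B : 𝔅, A ⊓ f B A = A ⊓ B := by
  intro A B
  apply le_antisymm
  · exact le_inf inf_le_left (β3 A B)
  · have h := β3 A Bᶜ
    rw [β4] at h
    have hb : A ⊓ B ⊓ (f B A)ᶜ = ⊥ := by
      have : A ⊓ B ⊓ (f B A)ᶜ ≤ B ⊓ Bᶜ :=
        le_inf (inf_le_left.trans inf_le_right)
          ((inf_le_inf_right _ inf_le_left).trans h)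
      simpa using le_bot_iff.mp (by simpa using this)
    have h2 : A ⊓ B ≤ f B A := by
      rwa [← sdiff_eq_bot_iff, sdiff_eq]
    exact le_inf inf_le_left h2
end

section
/- Independence and proof: in a conditional model satisfying β1, β4 and β5w, if f(B, A) = B and A ∪ B = Ω, then A = Ω or B = Ω. -/
theorem independence_and_proof {𝔅 : Type*} [BooleanAlgebra 𝔅] (f : 𝔅 → 𝔅 → 𝔅)
    (β1 : ∀ A X : 𝔅, A ≤ X → A ≠ ⊥ → f X A = ⊤)
    (β4 : ∀ A X : 𝔅, f Xᶜ A = (f X A)ᶜ)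
    (β5w : ∀ A X : 𝔅, f X A = X → f X Aᶜ = X) :
    ∀ A B : 𝔅, f B A = B → A ⊔ B = ⊤ → A = ⊤ ∨ B = ⊤ := by
  intro A B hf hsup
  by_cases hA : Aᶜ = ⊥
  · left
    simpa using congrArg compl hA
  · right
    have hle : Aᶜ ≤ B := by
      have h : Aᶜ = Aᶜ ⊓ (A ⊔ B) := by rw [hsup, inf_top_eq]
      rw [h, inf_sup_left]
      simp
    have h1 := β1 Aᶜ B hle hA
    have h2 := β5w A B hf
    rw [h2] at h1
    exact h1
end

section
/- Regularity: in a Boolean algebra with f satisfying (β1) [X ⊂ Y and X ≠ ∅ imply f(Y, X) = Ω], (β2eq) f(X ∪ Y, A) = f(X, A) ∪ f(Y, A), and (β4) f(∼X, A) = ∼f(X, A): if f(A, C) = A, f(B, C) = B, A ∩ C ⊂ B ∩ C, and C ≠ ∅, then A ⊂ B. -/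
theorem cond_regularity {𝔅 : Type*} [BooleanAlgebra 𝔅] (f : 𝔅 → 𝔅 → 𝔅)
    (β1 : ∀ X Y : 𝔅, X ≤ Y → X ≠ ⊥ → f Y X = ⊤)
    (β2eq : ∀ A X Y : 𝔅, f (X ⊔ Y) A = f X A ⊔ f Y A)
    (β4 : ∀ A X : 𝔅, f Xᶜ A = (f X A)ᶜ) :
    ∀ A B C : 𝔅, f A C = A → f B C = B → A ⊓ C ≤ B ⊓ C → C ≠ ⊥ → A ≤ B := by
  intro A B C hA hB hAC hC
  have hD : f (Aᶜ ⊔ B) C = Aᶜ ⊔ B := by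
    rw [β2eq, β4, hA, hB]
  have hCD : C ≤ Aᶜ ⊔ B := by
    have : A ⊓ C ≤ B := hAC.trans inf_le_left
    have := le_himp_iff.mpr (by rwa [inf_comm] at this)
    simpa [himp_eq, sup_comm] using this
  have : (Aᶜ ⊔ B) = ⊤ := by rw [← hD]; exact β1 C _ hCD hC
  have : A ≤ Aᶜ ⊔ B := this ▸ le_top
  calc A = A ⊓ (Aᶜ ⊔ B) := by rw [inf_eq_left.mpr this]
    _ = A ⊓ B := by rw [inf_sup_left]; simp
    _ ≤ B := inf_le_right
end

section
/- Model-theoretic Lewis triviality: let B be a Boolean algebra with an operation f satisfying (β1) [X ⊂ Y and X ≠ ∅ imply f(Y, X) = Ω], (β3) A ∩ f(X, A) ⊂ X, (β4) f(∼X, A) = ∼f(X, A), and the composition axiom f(f(C, Y), X) = f(C, X ∩ Y) for all X, Y, C. Then for all A, B: if A ∩ B ≠ ∅ and A ∩ ∼B ≠ ∅, then f(B, A) = B. -/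
theorem model_lewis_triviality {𝔅 : Type*} [BooleanAlgebra 𝔅] (f : 𝔅 → 𝔅 → 𝔅)
    (β1 : ∀ X Y : 𝔅, X ≤ Y → X ≠ ⊥ → f Y X = ⊤)
    (β3 : ∀ A X : 𝔅, A ⊓ f X A ≤ X)
    (β4 : ∀ A X : 𝔅, f Xᶜ A = (f X A)ᶜ)
    (comp : ∀ X Y C : 𝔅, f (f C Y) X = f C (X ⊓ Y)) :
    ∀ A B : 𝔅, A ⊓ B ≠ ⊥ → A ⊓ Bᶜ ≠ ⊥ → f B A = B := by
  -- inference property: G ⊓ f X G = G ⊓ X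
  have inf_prop : ∀ G X : 𝔅, G ⊓ f X G = G ⊓ X := by
    intro G X
    apply le_antisymm
    · exact le_inf inf_le_left (β3 G X)
    · have h1 : G ⊓ (f X G)ᶜ ≤ Xᶜ := by rw [← β4]; exact β3 G Xᶜ
      have h2 : G ⊓ X ⊓ (f X G)ᶜ ≤ ⊥ := by
        calc G ⊓ X ⊓ (f X G)ᶜ ≤ X ⊓ Xᶜ := by
              refine le_inf ?_ ?_
              · exact le_trans inf_le_left inf_le_right
              · exact le_trans (inf_le_inf_right _ inf_le_left) h1
          _ = ⊥ := inf_compl_eq_bot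
      have h3 : G ⊓ X ≤ f X G := by
        calc G ⊓ X = (G ⊓ X ⊓ f X G) ⊔ (G ⊓ X ⊓ (f X G)ᶜ) := by
              rw [← inf_sup_left, sup_compl_eq_top, inf_top_eq]
          _ ≤ f X G ⊔ ⊥ := sup_le_sup inf_le_right h2
          _ = f X G := sup_bot_eq _
      exact le_inf inf_le_left h3
  intro A B hAB hAB'
  -- Part 1: B ⊓ f B A = B
  have hcomp : f (f B A) B = f B (B ⊓ A) := comp B A B
  have h1 : f B (B ⊓ A) = ⊤ := β1 (B ⊓ A) B inf_le_left (by rwa [inf_comm])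
  have key1 : B ⊓ f B A = B := by
    have := inf_prop B (f B A)
    rw [hcomp, h1, inf_top_eq] at this
    exact this.symm
  -- Part 2: Bᶜ ⊓ f B A = ⊥
  have hcomp2 : f (f B A) Bᶜ = f B (Bᶜ ⊓ A) := comp Bᶜ A B
  have h2top : f Bᶜ (Bᶜ ⊓ A) = ⊤ := β1 (Bᶜ ⊓ A) Bᶜ inf_le_left (by rwa [inf_comm])
  have h2 : f B (Bᶜ ⊓ A) = ⊥ := by
    have := β4 (Bᶜ ⊓ A) B
    rw [h2top] at this
    exact compl_eq_top.mp this.symm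
  have key2 : Bᶜ ⊓ f B A = ⊥ := by
    have := inf_prop Bᶜ (f B A)
    rw [hcomp2, h2, inf_bot_eq] at this
    exact this.symm
  -- combine
  have : f B A = (f B A ⊓ B) ⊔ (f B A ⊓ Bᶜ) := by
    rw [← inf_sup_left, sup_compl_eq_top, inf_top_eq]
  rw [this, inf_comm, key1, inf_comm, key2, sup_bot_eq]
end

section
/- Bayes inference: let B be a Boolean algebra with f : B × B → B satisfying the inference property A ∩ f(X, A) = A ∩ X and the inter-independence property f(f(X, A), A) = f(X, A). Let P : B → ℝ≥0 be finitely additive with P(⊥) = 0, P(⊤) = 1, and multiplicative in the sense that f(Y, X) = Y implies P(X ∩ Y) = P(X)·P(Y). Then P(f(X, A))·P(A) = P(A ∩ X) for all A, X. -/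
theorem bayes_inference {𝔅 : Type*} [BooleanAlgebra 𝔅] (f : 𝔅 → 𝔅 → 𝔅)
    (hinf : ∀ A X : 𝔅, A ⊓ f X A = A ⊓ X)
    (hinter : ∀ A X : 𝔅, f (f X A) A = f X A)
    (P : 𝔅 → NNReal)
    (hadd : ∀ X Y : 𝔅, P (X ⊓ Y) + P (X ⊔ Y) = P X + P Y)
    (hbot : P ⊥ = 0) (htop : P ⊤ = 1)
    (hmult : ∀ X Y : 𝔅, f Y X = Y → P (X ⊓ Y) = P X * P Y) :
    ∀ A X : 𝔅, P (f X A) * P A = P (A ⊓ X) := by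
  intro A X
  have h := hmult A (f X A) (hinter A X)
  rw [hinf A X] at h
  rw [h, mul_comm]
end
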